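/- Let u : ℝ → ℝ be continuous, even, nonnegative with compact support and unit integral, d ≥ 2, and F = I_d[abs * u]. Then F(s) = C_d |s| + O(1/s) as s → ∞, where C_d = Γ(d/2)/(√π Γ((d+1)/2)); in particular F − C_d·abs ∈ C₀(ℝ) ∩ L²(ℝ). -/

import Mathlib

open MeasureTheory Filter

/-- Surface area of the unit sphere `S^k ⊆ ℝ^(k+1)`. -/
noncomputable def sphArea (k : ℕ) : ℝ :=
  2 * Real.pi ^ (((k : ℝ) + 1) / 2) / Real.Gamma (((k : ℝ) + 1) / 2)

/-- The Riemann--Liouville fractional integral operator `I_d`. -/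
noncomputable def RL (d : ℕ) (f : ℝ → ℝ) (s : ℝ) : ℝ :=
  (2 * sphArea (d - 2) / sphArea (d - 1)) *
    ∫ t in (0:ℝ)..1, f (t * s) * (1 - t ^ 2) ^ (((d : ℝ) - 3) / 2)

/-!
Write `∫ |x - y| u(y) dy = |x| + G x`. For `|x|` beyond the support of `u` we have
`|x - y| = |x| - sign x * y` on that support, and the first moment of the even `u` vanishes, so
`G` is continuous with compact support. The operator `I_d` is linear and, by the Beta integral
`∫₀¹ t (1 - t²)^((d-3)/2) dt = 1 / (d - 1)` and the ratio of sphere areas, `I_d[|·|] = C_d |·|`.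
Hence `F - C_d |·| = I_d[G]`, and in `I_d[G](s)` only `t ≤ R / |s|` contributes, which gives the
`O(1/|s|)` decay; continuity plus this decay yields the `C₀` and `L²` statements.
-/

open Set

section Weight

variable {α : ℝ}

lemma intervalIntegrable_one_sub_sq_rpow (hα : -1 < α) :
    IntervalIntegrable (fun t : ℝ => (1 - t ^ 2) ^ α) volume 0 1 := by
  have hsub : IntervalIntegrable (fun t : ℝ => (1 - t) ^ α) volume 0 1 := by
    simpa using
      ((intervalIntegral.intervalIntegrable_rpow' (a := 0) (b := 1) hα).comp_sub_left 1).symm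
  have hadd : ContinuousOn (fun t : ℝ => (1 + t) ^ α) (uIcc 0 1) := by
    intro t ht
    rw [uIcc_of_le zero_le_one] at ht
    have : (1 + t : ℝ) ≠ 0 := by linarith [ht.1]
    exact ((continuousAt_const.add continuousAt_id).rpow_const (Or.inl this)).continuousWithinAt
  refine (hsub.continuousOn_mul hadd).congr fun t ht => ?_
  rw [uIoc_of_le zero_le_one] at ht
  rw [← Real.mul_rpow (by linarith [ht.1]) (by linarith [ht.2])]
  ring_nf

lemma intervalIntegrable_mul_one_sub_sq_rpow (hα : -1 < α) {f : ℝ → ℝ} (hf : Continuous f) :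
    IntervalIntegrable (fun t => f t * (1 - t ^ 2) ^ α) volume 0 1 :=
  (intervalIntegrable_one_sub_sq_rpow hα).continuousOn_mul hf.continuousOn

lemma integral_mul_one_sub_sq_rpow (hα : -1 < α) :
    ∫ t in (0:ℝ)..1, t * (1 - t ^ 2) ^ α = 1 / (2 * (α + 1)) := by
  have hα1 : 0 < α + 1 := by linarith
  set G : ℝ → ℝ := fun t => -(1 - t ^ 2) ^ (α + 1) / (2 * (α + 1))
  have hG : ContinuousOn G (Icc 0 1) :=
    ((ContinuousOn.rpow_const (by fun_prop) fun _ _ => Or.inr hα1.le).neg).div_const _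
  have hG' : ∀ t ∈ Ioo (0:ℝ) 1, HasDerivAt G (t * (1 - t ^ 2) ^ α) t := by
    intro t ht
    have hpos : 0 < 1 - t ^ 2 := by nlinarith [ht.1, ht.2]
    have := ((((hasDerivAt_pow 2 t).const_sub 1).rpow_const (p := α + 1)
      (Or.inl hpos.ne')).neg).div_const (2 * (α + 1))
    rw [add_sub_cancel_right] at this
    exact this.congr_deriv (by field_simp; ring)
  rw [intervalIntegral.integral_eq_sub_of_hasDeriv_right_of_le zero_le_one hG
    (fun t ht => (hG' t ht).hasDerivWithinAt)
    (intervalIntegrable_mul_one_sub_sq_rpow hα continuous_id)]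
  simp [G, Real.zero_rpow hα1.ne']
  field_simp

lemma one_sub_sq_rpow_le_of_le_half {t : ℝ} (ht₀ : 0 ≤ t) (ht : t ≤ 1 / 2) :
    (1 - t ^ 2) ^ α ≤ max 1 ((3 / 4) ^ α) := by
  rcases le_total 0 α with hα | hα
  · exact (Real.rpow_le_one (by nlinarith) (by nlinarith) hα).trans (le_max_left _ _)
  · exact (Real.rpow_le_rpow_of_nonpos (by norm_num) (by nlinarith) hα).trans (le_max_right _ _)

end Weight

lemma sphArea_div_sphArea_succ (k : ℕ) :
    sphArea k / sphArea (k + 1) =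
      Real.Gamma (((k : ℝ) + 2) / 2) / (Real.sqrt Real.pi * Real.Gamma (((k : ℝ) + 1) / 2)) := by
  have hΓ₁ : Real.Gamma (((k : ℝ) + 1) / 2) ≠ 0 := (Real.Gamma_pos_of_pos (by positivity)).ne'
  have hΓ₂ : Real.Gamma (((k : ℝ) + 2) / 2) ≠ 0 := (Real.Gamma_pos_of_pos (by positivity)).ne'
  have hπ : Real.pi ^ (((k : ℝ) + 2) / 2) = Real.pi ^ (((k : ℝ) + 1) / 2) * Real.sqrt Real.pi := by
    rw [Real.sqrt_eq_rpow, ← Real.rpow_add Real.pi_pos]; ring_nf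
  have hπ₀ : Real.pi ^ (((k : ℝ) + 1) / 2) ≠ 0 := (Real.rpow_pos_of_pos Real.pi_pos _).ne'
  have hsqrt : Real.sqrt Real.pi ≠ 0 := (Real.sqrt_pos.mpr Real.pi_pos).ne'
  simp only [sphArea, Nat.cast_add, Nat.cast_one, add_assoc, one_add_one_eq_two, hπ]
  field_simp

section RL

variable {d : ℕ}

lemma neg_one_lt_RL_exponent (hd : 2 ≤ d) : -1 < ((d : ℝ) - 3) / 2 := by
  have : (2 : ℝ) ≤ d := by exact_mod_cast hd
  linarith

lemma RL_add (hd : 2 ≤ d) {f g : ℝ → ℝ} (hf : Continuous f) (hg : Continuous g) (s : ℝ) :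
    RL d (fun x => f x + g x) s = RL d f s + RL d g s := by
  have hα := neg_one_lt_RL_exponent hd
  simp only [RL, add_mul]
  rw [intervalIntegral.integral_add
    (intervalIntegrable_mul_one_sub_sq_rpow hα (f := fun t => f (t * s)) (by fun_prop))
    (intervalIntegrable_mul_one_sub_sq_rpow hα (f := fun t => g (t * s)) (by fun_prop)), mul_add]

lemma RL_abs (hd : 2 ≤ d) (s : ℝ) :
    RL d (fun x => |x|) s =
      Real.Gamma ((d : ℝ) / 2) / (Real.sqrt Real.pi * Real.Gamma (((d : ℝ) + 1) / 2)) * |s| := by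
  have hα := neg_one_lt_RL_exponent hd
  have hmoment : ∫ t in (0:ℝ)..1, |t * s| * (1 - t ^ 2) ^ (((d : ℝ) - 3) / 2) =
      |s| * (1 / (2 * (((d : ℝ) - 3) / 2 + 1))) := by
    rw [← integral_mul_one_sub_sq_rpow hα, ← intervalIntegral.integral_const_mul]
    refine intervalIntegral.integral_congr fun t ht => ?_
    rw [uIcc_of_le zero_le_one] at ht
    simp only [abs_mul, abs_of_nonneg ht.1]
    ring
  obtain ⟨k, rfl⟩ : ∃ k, d = k + 2 := ⟨d - 2, by omega⟩
  have hk : (k + 2 - 2 : ℕ) = k := rfl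
  have hk' : (k + 2 - 1 : ℕ) = k + 1 := rfl
  rw [RL, hmoment, hk, hk', mul_div_assoc, sphArea_div_sphArea_succ]
  have hΓ : Real.Gamma (((k : ℝ) + 2 + 1) / 2) =
      ((k : ℝ) + 1) / 2 * Real.Gamma (((k : ℝ) + 1) / 2) := by
    rw [← Real.Gamma_add_one (by positivity)]; ring_nf
  have hΓ₁ : Real.Gamma (((k : ℝ) + 1) / 2) ≠ 0 := (Real.Gamma_pos_of_pos (by positivity)).ne'
  have hsqrt : Real.sqrt Real.pi ≠ 0 := (Real.sqrt_pos.mpr Real.pi_pos).ne'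
  have hk₁ : (k : ℝ) + 1 ≠ 0 := by positivity
  push_cast
  rw [hΓ, show ((k : ℝ) + 2 - 3) / 2 + 1 = ((k : ℝ) + 1) / 2 by ring]
  field_simp

end RL

section RLCompactSupport

variable {d : ℕ} {g : ℝ → ℝ}

lemma continuous_RL (hd : 2 ≤ d) (hg : Continuous g) (hgc : HasCompactSupport g) :
    Continuous (RL d g) := by
  obtain ⟨M, hM⟩ := hg.bounded_above_of_compact_support hgc
  have hw := intervalIntegrable_one_sub_sq_rpow (neg_one_lt_RL_exponent hd)
  refine continuous_const.mul (intervalIntegral.continuous_of_dominated_interval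
    (bound := fun t => M * ‖(1 - t ^ 2) ^ (((d : ℝ) - 3) / 2)‖) (fun s => ?_) (fun s => ?_)
    (hw.norm.const_mul M) (ae_of_all _ fun t _ => by fun_prop))
  · exact (Continuous.aestronglyMeasurable (by fun_prop)).mul
      (Measurable.aestronglyMeasurable (by fun_prop))
  · refine ae_of_all _ fun t _ => ?_
    rw [norm_mul]
    exact mul_le_mul_of_nonneg_right (hM _) (norm_nonneg _)

lemma exists_abs_RL_le_div (hd : 2 ≤ d) (hg : Continuous g) (hgc : HasCompactSupport g) :
    ∃ C R : ℝ, ∀ s : ℝ, R ≤ |s| → |RL d g s| ≤ C / |s| := by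
  set α : ℝ := ((d : ℝ) - 3) / 2
  set c : ℝ := 2 * sphArea (d - 2) / sphArea (d - 1)
  obtain ⟨M, hM⟩ := hg.bounded_above_of_compact_support hgc
  obtain ⟨R, hR, hgR⟩ := hgc.exists_pos_le_norm
  set B : ℝ := max 1 ((3 / 4) ^ α)
  refine ⟨|c| * (M * B * R), 2 * R, fun s hs => ?_⟩
  have hs₀ : 0 < |s| := by linarith
  set ρ := R / |s|
  have hρ₀ : 0 < ρ := div_pos hR hs₀
  have hρ : ρ ≤ 1 / 2 := by rw [div_le_iff₀ hs₀]; linarith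
  have hF := intervalIntegrable_mul_one_sub_sq_rpow (neg_one_lt_RL_exponent hd)
    (f := fun t => g (t * s)) (by fun_prop)
  have hρ₁ : ρ ∈ uIcc (0:ℝ) 1 := by
    rw [uIcc_of_le zero_le_one]; exact ⟨hρ₀.le, by linarith⟩
  have hsplit := intervalIntegral.integral_add_adjacent_intervals
    (hF.mono_set (uIcc_subset_uIcc left_mem_uIcc hρ₁))
    (hF.mono_set (uIcc_subset_uIcc hρ₁ right_mem_uIcc))
  have htail : ∫ t in ρ..1, g (t * s) * (1 - t ^ 2) ^ α = 0 := by
    refine (intervalIntegral.integral_congr fun t ht => ?_).trans intervalIntegral.integral_zero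
    rw [uIcc_of_le (hρ.trans one_half_lt_one.le)] at ht
    have : R ≤ ‖t * s‖ := by
      rw [Real.norm_eq_abs, abs_mul, abs_of_pos (hρ₀.trans_le ht.1)]
      calc R = ρ * |s| := (div_mul_cancel₀ R hs₀.ne').symm
        _ ≤ t * |s| := by gcongr; exact ht.1
    simp [hgR _ this]
  have hhead : ‖∫ t in (0:ℝ)..ρ, g (t * s) * (1 - t ^ 2) ^ α‖ ≤ M * B * |ρ - 0| := by
    refine intervalIntegral.norm_integral_le_of_norm_le_const fun t ht => ?_
    rw [uIoc_of_le hρ₀.le] at ht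
    have hw₀ : 0 ≤ (1 - t ^ 2) ^ α := Real.rpow_nonneg (by nlinarith [ht.1, ht.2]) _
    rw [norm_mul, Real.norm_of_nonneg hw₀]
    exact mul_le_mul (hM _) (one_sub_sq_rpow_le_of_le_half ht.1.le (ht.2.trans hρ)) hw₀
      ((norm_nonneg _).trans (hM 0))
  calc |RL d g s| = |c| * ‖∫ t in (0:ℝ)..ρ, g (t * s) * (1 - t ^ 2) ^ α‖ := by
        rw [RL, ← hsplit, htail, add_zero, abs_mul, Real.norm_eq_abs]
    _ ≤ |c| * (M * B * |ρ - 0|) := by gcongr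
    _ = |c| * (M * B * R) / |s| := by
        rw [sub_zero, abs_of_pos hρ₀]; ring

end RLCompactSupport

section Decay

variable {h : ℝ → ℝ} {C R : ℝ}

lemma tendsto_cocompact_zero_of_abs_le_div (hdecay : ∀ s, R ≤ |s| → |h s| ≤ C / |s|) :
    Tendsto h (cocompact ℝ) (nhds 0) :=
  squeeze_zero_norm' ((tendsto_norm_cocompact_atTop.eventually_ge_atTop R).mono hdecay)
    (tendsto_const_nhds.div_atTop tendsto_norm_cocompact_atTop)

lemma memLp_two_of_abs_le_div (hh : Continuous h) (hdecay : ∀ s, R ≤ |s| → |h s| ≤ C / |s|) :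
    MemLp h 2 volume := by
  rw [memLp_two_iff_integrable_sq hh.aestronglyMeasurable]
  refine (hh.pow 2).locallyIntegrable.integrable_of_isBigO_cocompact ?_
    (integrable_inv_one_add_sq.integrableAtFilter _)
  refine Asymptotics.IsBigO.of_bound (2 * C ^ 2) ?_
  filter_upwards [tendsto_norm_cocompact_atTop.eventually_ge_atTop (max R 1)] with s hs
  rw [Real.norm_eq_abs] at hs
  have hs₁ : 1 ≤ s ^ 2 := by nlinarith [le_max_right R 1, sq_abs s]
  have hsq : h s ^ 2 ≤ C ^ 2 / s ^ 2 := by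
    rw [← sq_abs (h s), ← sq_abs s, ← div_pow]
    exact pow_le_pow_left₀ (abs_nonneg _) (hdecay s ((le_max_left R 1).trans hs)) 2
  rw [Pi.pow_apply, Real.norm_of_nonneg (sq_nonneg _), Real.norm_of_nonneg (by positivity)]
  calc h s ^ 2 ≤ C ^ 2 / s ^ 2 := hsq
    _ ≤ 2 * C ^ 2 * (1 + s ^ 2)⁻¹ := by
      rw [← div_eq_mul_inv, div_le_div_iff₀ (by positivity) (by positivity)]
      nlinarith [sq_nonneg C]

end Decay

section AbsConvolution

variable {u : ℝ → ℝ}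

lemma integral_id_mul_eq_zero_of_even (heven : ∀ x, u (-x) = u x) : ∫ y, y * u y = 0 := by
  have h := integral_neg_eq_self (fun y => y * u y) volume
  simp only [heven, neg_mul, integral_neg] at h
  linarith

lemma continuous_integral_abs_sub_mul (hcont : Continuous u) (hsupp : HasCompactSupport u) :
    Continuous fun x => ∫ y, |x - y| * u y := by
  refine (hsupp.continuous_convolution_left (ContinuousLinearMap.mul ℝ ℝ) hcont
    (μ := volume) (g := fun x : ℝ => |x|) continuous_abs.locallyIntegrable).congr fun x => ?_
  simp [convolution_def, mul_comm]

lemma integral_abs_sub_mul_eventuallyEq_abs (hcont : Continuous u) (hsupp : HasCompactSupport u)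
    (heven : ∀ x, u (-x) = u x) (hint : ∫ x, u x = 1) :
    (fun x => ∫ y, |x - y| * u y) =ᶠ[cocompact ℝ] fun x => |x| := by
  obtain ⟨R, -, hR⟩ := hsupp.exists_pos_le_norm
  have hu : Integrable u := hcont.integrable_of_hasCompactSupport hsupp
  have hyu : Integrable fun y => y * u y :=
    (continuous_id.mul hcont).integrable_of_hasCompactSupport hsupp.mul_left
  have hmoment := integral_id_mul_eq_zero_of_even heven
  filter_upwards [tendsto_norm_cocompact_atTop.eventually_gt_atTop R] with x hx
  rw [Real.norm_eq_abs] at hx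
  have hy : ∀ y, u y ≠ 0 → |y| < |x| := fun y hy =>
    (not_le.mp fun h => hy (hR y h)).trans hx
  rcases le_or_gt 0 x with hx₀ | hx₀
  · have : ∀ y, |x - y| * u y = x * u y - y * u y := fun y => by
      by_cases hy0 : u y = 0
      · simp [hy0]
      have := hy y hy0
      rw [abs_of_nonneg (by rw [abs_of_nonneg hx₀] at this; linarith [le_abs_self y])]
      ring
    simp only [this]
    rw [integral_sub (hu.const_mul x) hyu, integral_const_mul, hint, hmoment, abs_of_nonneg hx₀]
    ring
  · have : ∀ y, |x - y| * u y = y * u y - x * u y := fun y => by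
      by_cases hy0 : u y = 0
      · simp [hy0]
      have := hy y hy0
      rw [abs_of_nonpos (by rw [abs_of_neg hx₀] at this; linarith [neg_abs_le y])]
      ring
    simp only [this]
    rw [integral_sub hyu (hu.const_mul x), integral_const_mul, hint, hmoment, abs_of_neg hx₀]
    ring

end AbsConvolution

theorem stmt_14_general (d : ℕ) (hd : 2 ≤ d) (u : ℝ → ℝ) (hcont : Continuous u)
    (heven : ∀ x, u (-x) = u x)
    (hsupp : HasCompactSupport u) (hint : ∫ x, u x = 1) :
    (∃ C R : ℝ, ∀ s : ℝ, R ≤ |s| →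
      abs (RL d (fun x => ∫ y, |x - y| * u y) s
        - Real.Gamma ((d : ℝ) / 2) / (Real.sqrt Real.pi * Real.Gamma (((d : ℝ) + 1) / 2)) * |s|)
        ≤ C / |s|) ∧
    Continuous (fun s => RL d (fun x => ∫ y, |x - y| * u y) s
        - Real.Gamma ((d : ℝ) / 2) / (Real.sqrt Real.pi * Real.Gamma (((d : ℝ) + 1) / 2)) * |s|) ∧
    Tendsto (fun s => RL d (fun x => ∫ y, |x - y| * u y) s
        - Real.Gamma ((d : ℝ) / 2) / (Real.sqrt Real.pi * Real.Gamma (((d : ℝ) + 1) / 2)) * |s|)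
      (cocompact ℝ) (nhds 0) ∧
    MeasureTheory.MemLp (fun s => RL d (fun x => ∫ y, |x - y| * u y) s
        - Real.Gamma ((d : ℝ) / 2) / (Real.sqrt Real.pi * Real.Gamma (((d : ℝ) + 1) / 2)) * |s|)
      2 MeasureTheory.volume := by
  set F : ℝ → ℝ := fun x => ∫ y, |x - y| * u y
  set G : ℝ → ℝ := fun x => F x - |x|
  have hG : Continuous G := (continuous_integral_abs_sub_mul hcont hsupp).sub continuous_abs
  have hGc : HasCompactSupport G := by
    rw [hasCompactSupport_iff_eventuallyEq, coclosedCompact_eq_cocompact]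
    filter_upwards [integral_abs_sub_mul_eventuallyEq_abs hcont hsupp heven hint] with x hx
    simp [G, F, hx]
  have hFG : ∀ s, RL d F s
      - Real.Gamma ((d : ℝ) / 2) / (Real.sqrt Real.pi * Real.Gamma (((d : ℝ) + 1) / 2)) * |s|
      = RL d G s := fun s => by
    rw [← RL_abs hd s, sub_eq_iff_eq_add', ← RL_add hd continuous_abs hG]
    simp [G]
  simp only [hFG]
  obtain ⟨C, R, hdecay⟩ := exists_abs_RL_le_div hd hG hGc
  exact ⟨⟨C, R, hdecay⟩, continuous_RL hd hG hGc, tendsto_cocompact_zero_of_abs_le_div hdecay,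
    memLp_two_of_abs_le_div (continuous_RL hd hG hGc) hdecay⟩

theorem stmt_14 (d : ℕ) (hd : 2 ≤ d) (u : ℝ → ℝ) (hcont : Continuous u)
    (heven : ∀ x, u (-x) = u x) (hnonneg : ∀ x, 0 ≤ u x)
    (hsupp : HasCompactSupport u) (hint : ∫ x, u x = 1) :
    (∃ C R : ℝ, ∀ s : ℝ, R ≤ |s| →
      abs (RL d (fun x => ∫ y, |x - y| * u y) s
        - Real.Gamma ((d : ℝ) / 2) / (Real.sqrt Real.pi * Real.Gamma (((d : ℝ) + 1) / 2)) * |s|)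
        ≤ C / |s|) ∧
    Continuous (fun s => RL d (fun x => ∫ y, |x - y| * u y) s
        - Real.Gamma ((d : ℝ) / 2) / (Real.sqrt Real.pi * Real.Gamma (((d : ℝ) + 1) / 2)) * |s|) ∧
    Tendsto (fun s => RL d (fun x => ∫ y, |x - y| * u y) s
        - Real.Gamma ((d : ℝ) / 2) / (Real.sqrt Real.pi * Real.Gamma (((d : ℝ) + 1) / 2)) * |s|)
      (cocompact ℝ) (nhds 0) ∧
    MeasureTheory.MemLp (fun s => RL d (fun x => ∫ y, |x - y| * u y) s
        - Real.Gamma ((d : ℝ) / 2) / (Real.sqrt Real.pi * Real.Gamma (((d : ℝ) + 1) / 2)) * |s|)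
      2 MeasureTheory.volume :=
  stmt_14_general d hd u hcont heven hsupp hint
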